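/- Let f₁, …, f_n, g₁, …, g_n ∈ L^∞(∂D) and z ∈ D. Then V⁻¹ [ Σᵢ (H_{fᵢ}* H_{gᵢ} − T_{φ_z}* H_{fᵢ}* H_{gᵢ} T_{φ_z}) ] V = Σᵢ H_{fᵢ} k_z ⊗ H_{gᵢ} k_z, where V is the antiunitary (Vh)(w) = w̄ conj(h(w)) and k_z is the normalized reproducing kernel. In particular the operator Σᵢ (H_{fᵢ}* H_{gᵢ} − T_{φ_z}* H_{fᵢ}* H_{gᵢ} T_{φ_z}) has rank at most n. -/

import Mathlib

/-!
Since `|φ_z| = 1` and `φ_z H² ⊆ H²`, multiplication by `φ_z` is an isometry of `L²` and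
`H_g T_{φ_z} h = (I - P)(φ_z H_g h)`. Splitting `⟨φ_z H_f h', φ_z H_g h⟩ = ⟨H_f h', H_g h⟩` along
`H² ⊕ (H²)ᗮ` therefore gives
`⟨H_f h', H_g h⟩ - ⟨H_f T_{φ_z} h', H_g T_{φ_z} h⟩ = ⟨P(φ_z H_f h'), P(φ_z H_g h)⟩`.
For `y ⊥ H²` the analytic part of `φ_z y` is `P(φ_z y) = -⟨V k_z, y⟩ k_z`: write
`φ_z = z - (1 - |z|²)^{1/2} w k_z` and check it on `y = V e_m = e_{-1-m}`, where it reduces to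
`P(w̄^m k_z) = z̄^m k_z`. With `‖k_z‖ = 1` and the symmetry `⟨H_f h, V k⟩ = ⟨H_f k, V h⟩` of
Hankel operators this yields `D h = Σ_i ⟨V h, H_{g_i} k_z⟩ V H_{f_i} k_z`; conjugating by the
involution `V` gives the identity, and the range of `D` lies in the span of the `n` vectors
`V H_{f_i} k_z`. All Fourier coefficients involved come from `k_z = (1 - |z|²)^{1/2} Σ_j z̄^j e_j`.
-/

noncomputable section
open MeasureTheory Complex
open scoped InnerProductSpace ComplexConjugate

set_option synthInstance.maxHeartbeats 400000

namespace HardySpace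

instance fact_two_pi_pos : Fact (0 < 2 * Real.pi) := ⟨by positivity⟩
abbrev 𝕋 : Type := AddCircle (2 * Real.pi)
abbrev μT : Measure 𝕋 := AddCircle.haarAddCircle
abbrev L2 : Type := Lp ℂ 2 μT
def cw : 𝕋 → ℂ := fun x => fourier 1 x
def Hardy : Submodule ℂ L2 :=
  (Submodule.span ℂ (Set.range fun n : ℕ => (fourierLp 2 (n : ℤ) : L2))).topologicalClosure
instance : CompleteSpace Hardy :=
  (Submodule.isClosed_topologicalClosure _).completeSpace_coe
def Pfull : L2 →L[ℂ] L2 := Hardy.subtypeL.comp (Hardy.orthogonalProjectionOnto)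

open Classical in
/-- The element of `L²` determined by an essentially bounded symbol
(junk value `0` if the function is not essentially bounded). -/
def symbolL2 (g : 𝕋 → ℂ) : L2 :=
  if hg : MemLp g ⊤ μT then (hg.mono_exponent le_top).toLp g else 0

/-- `g ∈ H^∞`: `g` is essentially bounded and lies in the Hardy space. -/
def InHinf (g : 𝕋 → ℂ) : Prop := MemLp g ⊤ μT ∧ symbolL2 g ∈ Hardy

theorem memMul {f : 𝕋 → ℂ} (hf : MemLp f ⊤ μT) (h : L2) :
    MemLp (fun x => f x * h x) 2 μT := by
  refine ⟨hf.aestronglyMeasurable.mul (Lp.aestronglyMeasurable h), ?_⟩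
  refine lt_of_le_of_lt ((eLpNorm_le_eLpNorm_top_mul_eLpNorm 2 f (Lp.aestronglyMeasurable h)
    (· * ·) 1 (Filter.Eventually.of_forall fun x => by simp [nnnorm_mul])).trans_eq
    (by rw [ENNReal.coe_one, one_mul])) ?_
  exact ENNReal.mul_lt_top hf.2 (Lp.memLp h).2

open Classical in
/-- Multiplication by an `L^∞` symbol, as a bounded operator on `L²`
(defined to be `0` for symbols that are not essentially bounded). -/
def mulCLM (f : 𝕋 → ℂ) : L2 →L[ℂ] L2 :=
  if hf : MemLp f ⊤ μT then
    LinearMap.mkContinuousOfExistsBound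
      { toFun := fun h => (memMul hf h).toLp (fun x => f x * h x)
        map_add' := fun h k => by
          rw [← MemLp.toLp_add]
          apply MemLp.toLp_congr
          filter_upwards [AEEqFun.coeFn_add (h : 𝕋 →ₘ[μT] ℂ) (k : 𝕋 →ₘ[μT] ℂ)] with x hx
          simp only [show ((h + k : L2) : 𝕋 →ₘ[μT] ℂ) = (h : 𝕋 →ₘ[μT] ℂ) + (k : 𝕋 →ₘ[μT] ℂ)
            from rfl, hx, Pi.add_apply]
          ring
        map_smul' := fun c h => by
          simp only [RingHom.id_apply]
          rw [← MemLp.toLp_const_smul]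
          apply MemLp.toLp_congr
          filter_upwards [AEEqFun.coeFn_smul c (h : 𝕋 →ₘ[μT] ℂ)] with x hx
          simp only [show ((c • h : L2) : 𝕋 →ₘ[μT] ℂ) = c • (h : 𝕋 →ₘ[μT] ℂ) from rfl, hx,
            Pi.smul_apply, smul_eq_mul]
          ring }
      ⟨(eLpNorm f ⊤ μT).toReal, fun h => by
        simp only [LinearMap.coe_mk, AddHom.coe_mk]
        rw [Lp.norm_toLp, Lp.norm_def]
        rw [← ENNReal.toReal_mul]
        refine ENNReal.toReal_mono ?_ ?_
        · exact ENNReal.mul_ne_top hf.2.ne (Lp.memLp h).2.ne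
        · exact (eLpNorm_le_eLpNorm_top_mul_eLpNorm 2 f (Lp.aestronglyMeasurable h)
            (· * ·) 1 (Filter.Eventually.of_forall fun x => by simp [nnnorm_mul])).trans_eq
            (by rw [ENNReal.coe_one, one_mul])⟩
  else 0

theorem continuous_cw : Continuous cw := map_continuous (fourier 1)

theorem norm_cw (x : 𝕋) : ‖cw x‖ = 1 := by
  rw [cw, fourier_apply]
  exact Circle.norm_coe _

theorem memVop (h : L2) : MemLp (fun x => conj (cw x) * conj (h x)) 2 μT := by
  refine MemLp.of_le_mul (c := 1) (Lp.memLp h)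
    ((continuous_cw.star.aestronglyMeasurable).mul
      (continuous_star.comp_aestronglyMeasurable (Lp.aestronglyMeasurable h)))
    (Filter.Eventually.of_forall fun x => ?_)
  simp [norm_cw x]

/-- The antiunitary operator `V` on `L²(∂D)` given by `(V h)(w) = conj(w) ⬝ conj(h(w))`. -/
def Vop (h : L2) : L2 := (memVop h).toLp _

/-- The Toeplitz operator `T_f h = P (f h)` on `H²`. -/
def Toeplitz (f : 𝕋 → ℂ) : Hardy →L[ℂ] Hardy :=
  (Hardy.orthogonalProjectionOnto).comp ((mulCLM f).comp Hardy.subtypeL)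

/-- The Hankel operator `H_f h = (I − P)(f h)`, from `H²` into `L²` (with range in `L² ⊖ H²`). -/
def Hankel (f : 𝕋 → ℂ) : Hardy →L[ℂ] L2 :=
  (ContinuousLinearMap.id ℂ L2 - Pfull).comp ((mulCLM f).comp Hardy.subtypeL)

/-- The Möbius map `φ_z`, viewed as a function on the circle. -/
def phiC (z : ℂ) : 𝕋 → ℂ := fun x => (z - cw x) / (1 - conj z * cw x)

/-- The normalized reproducing kernel `k_z` as a function on the circle. -/
def kfun (z : ℂ) : 𝕋 → ℂ := fun x => (Real.sqrt (1 - ‖z‖ ^ 2) : ℂ) / (1 - conj z * cw x)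

/-- The normalized reproducing kernel `k_z` as an element of `L²`. -/
def kz (z : ℂ) : L2 := symbolL2 (kfun z)

/-- The normalized reproducing kernel `k_z` as an element of the Hardy space `H²`
(for `|z| < 1`, `k_z` lies in `H²`, so this is just `k_z`). -/
def kzH (z : ℂ) : Hardy := Hardy.orthogonalProjectionOnto (kz z)

/-- The antianalytic part `f₋ = (I − P) f` of a bounded symbol, as a function. -/
def minusPart (f : 𝕋 → ℂ) : 𝕋 → ℂ := (symbolL2 f - Pfull (symbolL2 f) : L2)

/-- The harmonic (Poisson) extension of `h ∈ L¹(∂D)` at `z ∈ D`: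
`h(z) = ∫ h(w) (1 − |z|²)/|1 − w z̄|² dσ(w)`. -/
def poisson (h : 𝕋 → ℂ) (z : ℂ) : ℂ :=
  ∫ x, h x * (((1 - ‖z‖ ^ 2) / ‖1 - cw x * conj z‖ ^ 2 : ℝ) : ℂ) ∂μT

/-- The Poisson extension of a real-valued function. -/
def poissonR (h : 𝕋 → ℝ) (z : ℂ) : ℝ :=
  ∫ x, h x * ((1 - ‖z‖ ^ 2) / ‖1 - cw x * conj z‖ ^ 2) ∂μT

open Classical in
/-- The Möbius map `φ_z` viewed as a self-map of the circle `∂D` (for `|z| < 1`,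
`φ_z` maps the circle to itself). -/
def phiT (z : ℂ) : 𝕋 → 𝕋 := fun x =>
  if h : ‖phiC z x‖ = 1 then
    AddCircle.homeomorphCircle'.symm ⟨phiC z x, mem_sphere_zero_iff_norm.2 h⟩
  else x

/-- `H²(ℂⁿ) = H² ⊕ ⋯ ⊕ H²`. -/
abbrev HardyN (n : ℕ) := PiLp 2 (fun _ : Fin n => Hardy)
/-- `L²(ℂⁿ) = L² ⊕ ⋯ ⊕ L²`. -/
abbrev L2N (n : ℕ) := PiLp 2 (fun _ : Fin n => L2)

instance {n : ℕ} : CompleteSpace (HardyN n) :=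
  inferInstanceAs (CompleteSpace (PiLp 2 fun _ : Fin n => Hardy))
instance {n : ℕ} : CompleteSpace (L2N n) :=
  inferInstanceAs (CompleteSpace (PiLp 2 fun _ : Fin n => L2))

/-- The operator `(Fin n × Fin n)`-matrix of operators acting on direct sums. -/
def matrixCLM {n : ℕ} {A B : Type*} [NormedAddCommGroup A] [NormedAddCommGroup B]
    [NormedSpace ℂ A] [NormedSpace ℂ B] (T : Fin n → Fin n → (A →L[ℂ] B)) :
    (PiLp 2 fun _ : Fin n => A) →L[ℂ] (PiLp 2 fun _ : Fin n => B) :=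
  ((PiLp.continuousLinearEquiv 2 ℂ (fun _ : Fin n => B)).symm.toContinuousLinearMap.comp
    (ContinuousLinearMap.pi fun i => ∑ j, (T i j).comp (ContinuousLinearMap.proj j))).comp
    (PiLp.continuousLinearEquiv 2 ℂ (fun _ : Fin n => A)).toContinuousLinearMap

/-- The block Toeplitz operator `T_F` on `H²(ℂⁿ)`, given by the operator matrix `(T_{f_ij})`. -/
def blockToeplitz {n : ℕ} (F : Fin n → Fin n → 𝕋 → ℂ) : HardyN n →L[ℂ] HardyN n :=
  matrixCLM fun i j => Toeplitz (F i j)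

/-- The block Hankel operator `H_F` from `H²(ℂⁿ)` to `L²(ℂⁿ)`, given by the
operator matrix `(H_{f_ij})`. -/
def blockHankel {n : ℕ} (F : Fin n → Fin n → 𝕋 → ℂ) : HardyN n →L[ℂ] L2N n :=
  matrixCLM fun i j => Hankel (F i j)

/-- Pointwise product of matrix symbols. -/
def symMul {n : ℕ} (F G : Fin n → Fin n → 𝕋 → ℂ) : Fin n → Fin n → 𝕋 → ℂ :=
  fun i j x => ∑ k, F i k x * G k j x

/-- Pointwise conjugate transpose `F*` of a matrix symbol. -/
def symStar {n : ℕ} (F : Fin n → Fin n → 𝕋 → ℂ) : Fin n → Fin n → 𝕋 → ℂ :=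
  fun i j x => conj (F j i x)

/-- The rank-one operator `x ⊗ y` given by `(x ⊗ y) f = ⟨f, y⟩ x`, where the inner
product `⟨·,·⟩` is linear in the first argument. -/
def rankOne {E F : Type*} [NormedAddCommGroup E] [InnerProductSpace ℂ E]
    [NormedAddCommGroup F] [InnerProductSpace ℂ F] (x : F) (y : E) : E →L[ℂ] F :=
  (innerSL ℂ y).smulRight x

theorem _root_.Submodule.inner_eq_inner_starProjection_add {𝕜 E : Type*} [RCLike 𝕜]
    [NormedAddCommGroup E] [InnerProductSpace 𝕜 E] (K : Submodule 𝕜 E)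
    [K.HasOrthogonalProjection] (u v : E) :
    ⟪u, v⟫_𝕜 = ⟪K.starProjection u, K.starProjection v⟫_𝕜
      + ⟪u - K.starProjection u, v - K.starProjection v⟫_𝕜 := by
  have h1 := K.inner_right_of_mem_orthogonal (K.starProjection_apply_mem u)
    (K.sub_starProjection_mem_orthogonal v)
  have h2 := K.inner_left_of_mem_orthogonal (K.starProjection_apply_mem v)
    (K.sub_starProjection_mem_orthogonal u)
  conv_lhs =>
    rw [← add_sub_cancel (K.starProjection u) u, ← add_sub_cancel (K.starProjection v) v]
  rw [inner_add_left, inner_add_right, inner_add_right, h1, h2]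
  ring

theorem _root_.LinearMap.rank_le_of_range_le_span {K V W : Type*} [DivisionRing K]
    [AddCommGroup V] [Module K V] [AddCommGroup W] [Module K W] {n : ℕ} (T : V →ₗ[K] W)
    (w : Fin n → W)
    (h : LinearMap.range T ≤ Submodule.span K (Set.range w)) : T.rank ≤ n :=
  calc T.rank ≤ Module.rank K (Submodule.span K (Set.range w)) := Submodule.rank_mono h
    _ ≤ Cardinal.mk (Set.range w) := rank_span_le _
    _ ≤ n := by simpa using Cardinal.mk_range_le_lift (f := w)

theorem rankOne_apply {E F : Type*} [NormedAddCommGroup E] [InnerProductSpace ℂ E]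
    [NormedAddCommGroup F] [InnerProductSpace ℂ F] (x : F) (y u : E) :
    rankOne x y u = ⟪y, u⟫_ℂ • x := rfl

theorem Pfull_eq_starProjection : Pfull = Hardy.starProjection := rfl

theorem inner_L2_eq_integral (a b : L2) : ⟪a, b⟫_ℂ = ∫ x, conj (a x) * b x ∂μT := by
  simp only [MeasureTheory.L2.inner_def, RCLike.inner_apply']

theorem coeFn_symbolL2 {g : 𝕋 → ℂ} (hg : MemLp g ⊤ μT) :
    (symbolL2 g : 𝕋 → ℂ) =ᵐ[μT] g := by
  rw [symbolL2, dif_pos hg]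
  exact MemLp.coeFn_toLp _

theorem coeFn_mulCLM {f : 𝕋 → ℂ} (hf : MemLp f ⊤ μT) (h : L2) :
    (mulCLM f h : 𝕋 → ℂ) =ᵐ[μT] fun x => f x * h x := by
  rw [mulCLM, dif_pos hf, LinearMap.mkContinuousOfExistsBound_apply]
  exact MemLp.coeFn_toLp (memMul hf h)

theorem coeFn_Vop (h : L2) : (Vop h : 𝕋 → ℂ) =ᵐ[μT] fun x => conj (cw x) * conj (h x) :=
  MemLp.coeFn_toLp _

theorem conj_cw_mul_cw (x : 𝕋) : conj (cw x) * cw x = 1 := by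
  rw [mul_comm, Complex.mul_conj', norm_cw]
  norm_num

theorem memLp_continuousMap (F : C(𝕋, ℂ)) : MemLp F ⊤ μT :=
  memLp_top_of_bound F.continuous.aestronglyMeasurable ‖F‖ (ae_of_all _ F.norm_coe_le_norm)

theorem symbolL2_continuousMap (F : C(𝕋, ℂ)) :
    symbolL2 F = ContinuousMap.toLp 2 μT ℂ F := by
  apply Lp.ext
  filter_upwards [coeFn_symbolL2 (memLp_continuousMap F),
    ContinuousMap.coeFn_toLp (p := 2) (𝕜 := ℂ) μT F] with x h1 h2
  rw [h1, h2]

theorem mulCLM_comm {f g : 𝕋 → ℂ} (hf : MemLp f ⊤ μT) (hg : MemLp g ⊤ μT) (x : L2) :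
    mulCLM f (mulCLM g x) = mulCLM g (mulCLM f x) := by
  apply Lp.ext
  filter_upwards [coeFn_mulCLM hf (mulCLM g x), coeFn_mulCLM hg x,
    coeFn_mulCLM hg (mulCLM f x), coeFn_mulCLM hf x] with t h1 h2 h3 h4
  rw [h1, h3, h2, h4]
  ring

theorem inner_mulCLM_mulCLM_of_norm_eq_one {f : 𝕋 → ℂ} (hf : MemLp f ⊤ μT)
    (hf1 : ∀ x, ‖f x‖ = 1) (a b : L2) :
    ⟪mulCLM f a, mulCLM f b⟫_ℂ = ⟪a, b⟫_ℂ := by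
  rw [inner_L2_eq_integral, inner_L2_eq_integral]
  refine integral_congr_ae ?_
  filter_upwards [coeFn_mulCLM hf a, coeFn_mulCLM hf b] with t h1 h2
  have hconj : conj (f t) * f t = 1 := by
    rw [mul_comm, Complex.mul_conj', hf1]
    norm_num
  rw [h1, h2, map_mul]
  linear_combination (conj (a t) * b t) * hconj

theorem memLp_fourier (m : ℤ) : MemLp (fourier m : 𝕋 → ℂ) ⊤ μT :=
  memLp_continuousMap (fourier m)

theorem mulCLM_fourierLp {f : 𝕋 → ℂ} (hf : MemLp f ⊤ μT) (k : ℤ) :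
    mulCLM f (fourierLp 2 k) = mulCLM (fourier k) (symbolL2 f) := by
  apply Lp.ext
  filter_upwards [coeFn_mulCLM hf (fourierLp 2 k), coeFn_fourierLp (T := 2 * Real.pi) 2 k,
    coeFn_mulCLM (memLp_fourier k) (symbolL2 f), coeFn_symbolL2 hf] with t h1 h2 h3 h4
  rw [h1, h2, h3, h4, mul_comm]

theorem mulCLM_fourier_mulCLM_fourier (a b : ℤ) (x : L2) :
    mulCLM (fourier a) (mulCLM (fourier b) x) = mulCLM (fourier (a + b)) x := by
  apply Lp.ext
  filter_upwards [coeFn_mulCLM (memLp_fourier a) (mulCLM (fourier b) x),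
    coeFn_mulCLM (memLp_fourier b) x, coeFn_mulCLM (memLp_fourier (a + b)) x] with t h1 h2 h3
  rw [h1, h2, h3, fourier_add, mul_assoc]

theorem inner_fourierLp_mulCLM_fourier (n m : ℤ) (x : L2) :
    ⟪(fourierLp 2 n : L2), mulCLM (fourier m) x⟫_ℂ
      = ⟪(fourierLp 2 (n - m) : L2), x⟫_ℂ := by
  rw [inner_L2_eq_integral, inner_L2_eq_integral]
  refine integral_congr_ae ?_
  filter_upwards [coeFn_fourierLp (T := 2 * Real.pi) 2 n, coeFn_mulCLM (memLp_fourier m) x,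
    coeFn_fourierLp (T := 2 * Real.pi) 2 (n - m)] with t h1 h2 h3
  rw [h1, h2, h3, ← fourier_neg, ← fourier_neg, neg_sub, sub_eq_add_neg, add_comm m,
    fourier_add]
  ring

theorem isClosed_Hardy : IsClosed (Hardy : Set L2) := Submodule.isClosed_topologicalClosure _

theorem Hardy_le_of_fourierLp_mem {p : Submodule ℂ L2} (hp : IsClosed (p : Set L2))
    (h : ∀ n : ℕ, (fourierLp 2 n : L2) ∈ p) : Hardy ≤ p :=
  Submodule.topologicalClosure_minimal _ (Submodule.span_le.mpr (Set.range_subset_iff.mpr h)) hp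

theorem fourierLp_mem_Hardy (n : ℕ) : (fourierLp 2 n : L2) ∈ Hardy :=
  Submodule.le_topologicalClosure _ (Submodule.subset_span ⟨n, rfl⟩)

theorem inner_fourierLp_eq_zero_of_mem_Hardy {n : ℤ} (hn : n < 0) {x : L2} (hx : x ∈ Hardy) :
    ⟪(fourierLp 2 n : L2), x⟫_ℂ = 0 := by
  refine Submodule.mem_orthogonal_singleton_iff_inner_right.mp
    (Hardy_le_of_fourierLp_mem (Submodule.isClosed_orthogonal _) (fun m => ?_) hx)
  exact Submodule.mem_orthogonal_singleton_iff_inner_right.mpr (orthonormal_fourier.2 (by omega))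

theorem eq_zero_of_forall_inner_fourierLp_eq_zero {x : L2}
    (hx : ∀ n : ℤ, ⟪(fourierLp 2 n : L2), x⟫_ℂ = 0) : x = 0 := by
  refine (map_eq_zero_iff fourierBasis.repr fourierBasis.repr.injective).mp
    (lp.ext (funext fun n => ?_))
  rw [HilbertBasis.repr_apply_apply, coe_fourierBasis]
  exact hx n

theorem mem_Hardy_iff {x : L2} :
    x ∈ Hardy ↔ ∀ n : ℤ, n < 0 → ⟪(fourierLp 2 n : L2), x⟫_ℂ = 0 := by
  refine ⟨fun hx n hn => inner_fourierLp_eq_zero_of_mem_Hardy hn hx, fun hx => ?_⟩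
  have hy := Hardy.sub_starProjection_mem_orthogonal x
  rw [← Hardy.starProjection_eq_self_iff, eq_comm, ← sub_eq_zero]
  refine eq_zero_of_forall_inner_fourierLp_eq_zero fun n => ?_
  rcases lt_or_ge n 0 with hn | hn
  · rw [inner_sub_right, hx n hn,
      inner_fourierLp_eq_zero_of_mem_Hardy hn (Hardy.starProjection_apply_mem x), sub_zero]
  · lift n to ℕ using hn
    exact Hardy.inner_right_of_mem_orthogonal (fourierLp_mem_Hardy n) hy

theorem mem_Hardy_orthogonal_iff {x : L2} :
    x ∈ Hardyᗮ ↔ ∀ n : ℕ, ⟪(fourierLp 2 n : L2), x⟫_ℂ = 0 := by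
  refine ⟨fun hx n => Hardy.inner_right_of_mem_orthogonal (fourierLp_mem_Hardy n) hx,
    fun hx => ?_⟩
  refine (Submodule.mem_orthogonal _ _).mpr fun u hu => ?_
  refine Submodule.mem_orthogonal_singleton_iff_inner_left.mp
    (Hardy_le_of_fourierLp_mem (Submodule.isClosed_orthogonal _) (fun n => ?_) hu)
  exact Submodule.mem_orthogonal_singleton_iff_inner_left.mpr (hx n)

theorem mulCLM_mem_Hardy {f : 𝕋 → ℂ} (hf : InHinf f) {x : L2} (hx : x ∈ Hardy) :
    mulCLM f x ∈ Hardy := by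
  refine Hardy_le_of_fourierLp_mem (p := Hardy.comap (mulCLM f).toLinearMap)
    (isClosed_Hardy.preimage (mulCLM f).continuous) (fun k => ?_) hx
  rw [Submodule.mem_comap, ContinuousLinearMap.coe_coe, mulCLM_fourierLp hf.1, mem_Hardy_iff]
  intro n hn
  rw [inner_fourierLp_mulCLM_fourier]
  exact inner_fourierLp_eq_zero_of_mem_Hardy (by omega) hf.2

def VopL : L2 →ₗᵢ⋆[ℂ] L2 where
  toFun := Vop
  map_add' a b := by
    apply Lp.ext
    filter_upwards [coeFn_Vop (a + b), coeFn_Vop a, coeFn_Vop b, Lp.coeFn_add (Vop a) (Vop b),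
      Lp.coeFn_add a b] with t h1 h2 h3 h4 h5
    rw [h1, h4, Pi.add_apply, h2, h3, h5, Pi.add_apply, map_add, mul_add]
  map_smul' c a := by
    apply Lp.ext
    filter_upwards [coeFn_Vop (c • a), coeFn_Vop a, Lp.coeFn_smul (conj c) (Vop a),
      Lp.coeFn_smul c a] with t h1 h2 h3 h4
    rw [h1, h3, Pi.smul_apply, h2, h4, Pi.smul_apply, smul_eq_mul, smul_eq_mul, map_mul]
    ring
  norm_map' a := by
    rw [LinearMap.coe_mk, AddHom.coe_mk, Vop, Lp.norm_toLp, Lp.norm_def]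
    congr 1
    refine eLpNorm_congr_norm_ae (ae_of_all _ fun t => ?_)
    rw [norm_mul, RCLike.norm_conj, RCLike.norm_conj, norm_cw, one_mul]

theorem coe_VopL : ⇑VopL = Vop := rfl

theorem Vop_Vop (a : L2) : Vop (Vop a) = a := by
  apply Lp.ext
  filter_upwards [coeFn_Vop (Vop a), coeFn_Vop a] with t h1 h2
  rw [h1, h2, map_mul, Complex.conj_conj, Complex.conj_conj, ← mul_assoc, conj_cw_mul_cw, one_mul]

theorem Vop_fourierLp (n : ℤ) : Vop (fourierLp 2 n) = fourierLp 2 (-1 - n) := by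
  apply Lp.ext
  filter_upwards [coeFn_Vop (fourierLp 2 n), coeFn_fourierLp (T := 2 * Real.pi) 2 n,
    coeFn_fourierLp (T := 2 * Real.pi) 2 (-1 - n)] with t h1 h2 h3
  rw [h1, h2, h3, cw, ← fourier_neg, ← fourier_neg, ← fourier_add, sub_eq_add_neg]

theorem inner_Vop_comm (a b : L2) : ⟪Vop a, b⟫_ℂ = ⟪Vop b, a⟫_ℂ := by
  rw [inner_L2_eq_integral, inner_L2_eq_integral]
  refine integral_congr_ae ?_
  filter_upwards [coeFn_Vop a, coeFn_Vop b] with t ha hb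
  simp only [ha, hb, map_mul, Complex.conj_conj]
  ring

theorem inner_Vop_Vop (a b : L2) : ⟪Vop a, Vop b⟫_ℂ = ⟪b, a⟫_ℂ := by
  rw [inner_Vop_comm, Vop_Vop]

theorem inner_fourierLp_Vop (n : ℤ) (x : L2) :
    ⟪(fourierLp 2 n : L2), Vop x⟫_ℂ = conj ⟪(fourierLp 2 (-1 - n) : L2), x⟫_ℂ := by
  rw [← inner_conj_symm, inner_Vop_comm, Vop_fourierLp]

theorem Vop_mem_Hardy_orthogonal {x : L2} (hx : x ∈ Hardy) : Vop x ∈ Hardyᗮ :=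
  mem_Hardy_orthogonal_iff.mpr fun n => by
    rw [inner_fourierLp_Vop, inner_fourierLp_eq_zero_of_mem_Hardy (by omega) hx, map_zero]

theorem Vop_mem_Hardy {x : L2} (hx : x ∈ Hardyᗮ) : Vop x ∈ Hardy :=
  mem_Hardy_iff.mpr fun n hn => by
    obtain ⟨m, hm⟩ : ∃ m : ℕ, -1 - n = m := ⟨(-1 - n).toNat, by omega⟩
    rw [inner_fourierLp_Vop, hm, Hardy.inner_right_of_mem_orthogonal (fourierLp_mem_Hardy m) hx,
      map_zero]

theorem Pfull_Vop (u : L2) : Pfull (Vop u) = Vop (u - Pfull u) := by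
  have hsplit : Vop u = Vop (Pfull u) + Vop (u - Pfull u) := by
    rw [← coe_VopL, ← map_add, add_sub_cancel]
  rw [Pfull_eq_starProjection] at hsplit ⊢
  rw [hsplit, map_add, Hardy.starProjection_apply_eq_zero_iff.mpr
      (Vop_mem_Hardy_orthogonal (Hardy.starProjection_apply_mem u)),
    Hardy.starProjection_eq_self_iff.mpr
      (Vop_mem_Hardy (Hardy.sub_starProjection_mem_orthogonal u)),
    zero_add]

theorem hasSum_kz {z : ℂ} (hz : ‖z‖ < 1) :
    HasSum
      (fun j : ℕ => ((Real.sqrt (1 - ‖z‖ ^ 2) : ℂ) * conj z ^ j) • (fourierLp 2 j : L2))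
      (kz z) := by
  -- `(1 - z̄ e₁)⁻¹` is a geometric series in the Banach algebra `C(𝕋, ℂ)`, which maps
  -- continuously into `L²`.
  set a : C(𝕋, ℂ) := conj z • fourier 1 with ha_def
  have ha : ‖a‖ < 1 := by rwa [norm_smul, fourier_norm, mul_one, RCLike.norm_conj]
  have hinv : ∀ x, (∑' j, a ^ j) x * (1 - conj z * cw x) = 1 := fun x => by
    simpa [a, cw] using congr($(geom_series_mul_neg a ha) x)
  have hk : kfun z = ⇑((Real.sqrt (1 - ‖z‖ ^ 2) : ℂ) • ∑' j, a ^ j) := by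
    funext x
    rw [kfun, ContinuousMap.smul_apply, smul_eq_mul, div_eq_mul_inv,
      ← eq_inv_of_mul_eq_one_left (hinv x)]
  have hpow : ∀ j : ℕ, a ^ j = conj z ^ j • fourier (j : ℤ) := fun j => by
    rw [ha_def, smul_pow]
    congr 1
    induction j with
    | zero => ext; simp
    | succ j ih => rw [pow_succ, ih]; ext; simp
  rw [kz, hk, symbolL2_continuousMap, map_smul]
  convert ((summable_geometric_of_norm_lt_one ha).hasSum.mapL
    (ContinuousMap.toLp 2 μT ℂ)).const_smul ((Real.sqrt (1 - ‖z‖ ^ 2) : ℂ)) using 1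
  funext j
  rw [hpow, map_smul, mul_smul]

theorem hasSum_inner_fourierLp_kz {z : ℂ} (hz : ‖z‖ < 1) (n : ℤ) :
    HasSum (fun j : ℕ => if n = j then (Real.sqrt (1 - ‖z‖ ^ 2) : ℂ) * conj z ^ j else 0)
      ⟪(fourierLp 2 n : L2), kz z⟫_ℂ := by
  simpa only [innerSL_apply_apply, inner_smul_right, orthonormal_iff_ite.mp orthonormal_fourier,
    mul_ite, mul_one, mul_zero] using
    (hasSum_kz hz).mapL (innerSL ℂ (fourierLp 2 n : L2))

theorem inner_fourierLp_natCast_kz {z : ℂ} (hz : ‖z‖ < 1) (n : ℕ) :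
    ⟪(fourierLp 2 n : L2), kz z⟫_ℂ = (Real.sqrt (1 - ‖z‖ ^ 2) : ℂ) * conj z ^ n := by
  refine (hasSum_inner_fourierLp_kz hz n).unique ?_
  simp_rw [Nat.cast_inj, eq_comm (a := n)]
  convert hasSum_ite_eq n _ using 2 with j
  split_ifs with h <;> simp [h]

theorem inner_fourierLp_kz_of_neg {z : ℂ} (hz : ‖z‖ < 1) {n : ℤ} (hn : n < 0) :
    ⟪(fourierLp 2 n : L2), kz z⟫_ℂ = 0 := by
  refine (hasSum_inner_fourierLp_kz hz n).unique ?_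
  simp only [show ∀ j : ℕ, n ≠ j by omega, if_false]
  exact hasSum_zero

theorem kz_mem_Hardy {z : ℂ} (hz : ‖z‖ < 1) : kz z ∈ Hardy :=
  mem_Hardy_iff.mpr fun _ hn => inner_fourierLp_kz_of_neg hz hn

theorem coe_kzH {z : ℂ} (hz : ‖z‖ < 1) : (kzH z : L2) = kz z :=
  Hardy.starProjection_eq_self_iff.mpr (kz_mem_Hardy hz)

theorem inner_kz_self {z : ℂ} (hz : ‖z‖ < 1) : ⟪kz z, kz z⟫_ℂ = 1 := by
  have hr : ‖z‖ ^ 2 < 1 := by nlinarith [norm_nonneg z]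
  have hsum := (hasSum_kz hz).mapL (innerSL ℂ (kz z))
  set c : ℂ := ((Real.sqrt (1 - ‖z‖ ^ 2) : ℝ) : ℂ)
  have hc : c * conj c = 1 - ‖z‖ ^ 2 := by
    rw [Complex.conj_ofReal, ← Complex.ofReal_mul, Real.mul_self_sqrt (by linarith)]
    push_cast
    ring
  have hterm : ∀ j : ℕ, ⟪kz z, (c * conj z ^ j) • (fourierLp 2 j : L2)⟫_ℂ
      = (((1 - ‖z‖ ^ 2) * (‖z‖ ^ 2) ^ j : ℝ) : ℂ) := fun j => by
    rw [inner_smul_right, ← inner_conj_symm, inner_fourierLp_natCast_kz hz, map_mul, map_pow,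
      Complex.conj_conj]
    calc c * conj z ^ j * (conj c * z ^ j) = (c * conj c) * (z * conj z) ^ j := by ring
      _ = _ := by rw [hc, Complex.mul_conj']; push_cast; ring
  have hgeom := (hasSum_geometric_of_lt_one (by positivity) hr).mul_left (1 - ‖z‖ ^ 2)
  rw [mul_inv_cancel₀ (by linarith)] at hgeom
  refine hsum.unique ?_
  simp_rw [innerSL_apply_apply, hterm]
  simpa only [Complex.ofReal_one] using Complex.hasSum_ofReal.mpr hgeom

theorem Pfull_mulCLM_fourier_neg_kz {z : ℂ} (hz : ‖z‖ < 1) (m : ℕ) :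
    Pfull (mulCLM (fourier (-m)) (kz z)) = conj z ^ m • kz z := by
  have horth : mulCLM (fourier (-m)) (kz z) - conj z ^ m • kz z ∈ Hardyᗮ := by
    refine mem_Hardy_orthogonal_iff.mpr fun n => ?_
    rw [inner_sub_right, inner_smul_right, inner_fourierLp_mulCLM_fourier, sub_neg_eq_add,
      ← Nat.cast_add, inner_fourierLp_natCast_kz hz, inner_fourierLp_natCast_kz hz]
    ring
  rw [Pfull_eq_starProjection,
    ← sub_add_cancel (mulCLM (fourier (-m)) (kz z)) (conj z ^ m • kz z), map_add,
    Hardy.starProjection_apply_eq_zero_iff.mpr horth, zero_add,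
    Hardy.starProjection_eq_self_iff.mpr (Hardy.smul_mem _ (kz_mem_Hardy hz))]

theorem one_sub_conj_mul_cw_ne_zero {z : ℂ} (hz : ‖z‖ < 1) (x : 𝕋) :
    1 - conj z * cw x ≠ 0 := by
  intro h
  have := congr_arg norm (sub_eq_zero.mp h)
  rw [norm_one, norm_mul, norm_cw, mul_one, RCLike.norm_conj] at this
  linarith

theorem continuous_kfun {z : ℂ} (hz : ‖z‖ < 1) : Continuous (kfun z) :=
  continuous_const.div (continuous_const.sub (continuous_const.mul continuous_cw))
    (one_sub_conj_mul_cw_ne_zero hz)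

theorem continuous_phiC {z : ℂ} (hz : ‖z‖ < 1) : Continuous (phiC z) :=
  (continuous_const.sub continuous_cw).div
    (continuous_const.sub (continuous_const.mul continuous_cw)) (one_sub_conj_mul_cw_ne_zero hz)

theorem memLp_kfun {z : ℂ} (hz : ‖z‖ < 1) : MemLp (kfun z) ⊤ μT :=
  memLp_continuousMap ⟨kfun z, continuous_kfun hz⟩

theorem memLp_phiC {z : ℂ} (hz : ‖z‖ < 1) : MemLp (phiC z) ⊤ μT :=
  memLp_continuousMap ⟨phiC z, continuous_phiC hz⟩

theorem norm_phiC {z : ℂ} (hz : ‖z‖ < 1) (x : 𝕋) : ‖phiC z x‖ = 1 := by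
  have hden : 1 - conj z * cw x = cw x * conj (cw x - z) := by
    rw [map_sub]
    linear_combination -(conj_cw_mul_cw x)
  have hnum : ‖z - cw x‖ = ‖1 - conj z * cw x‖ := by
    rw [hden, norm_mul, norm_cw, one_mul, RCLike.norm_conj, norm_sub_rev]
  rw [phiC, norm_div, hnum, div_self (norm_ne_zero_iff.mpr (one_sub_conj_mul_cw_ne_zero hz x))]

theorem phiC_eq_sub {z : ℂ} (hz : ‖z‖ < 1) (x : 𝕋) :
    phiC z x = z - (Real.sqrt (1 - ‖z‖ ^ 2) : ℂ) * (cw x * kfun z x) := by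
  have hc : (Real.sqrt (1 - ‖z‖ ^ 2) : ℂ) * Real.sqrt (1 - ‖z‖ ^ 2) = 1 - z * conj z := by
    rw [← Complex.ofReal_mul, Real.mul_self_sqrt (by nlinarith [norm_nonneg z]),
      Complex.mul_conj']
    push_cast
    ring
  have hsq : (Real.sqrt (1 - ‖z‖ ^ 2) : ℂ) * (cw x * ((Real.sqrt (1 - ‖z‖ ^ 2) : ℂ)
      / (1 - conj z * cw x))) = (1 - z * conj z) * cw x / (1 - conj z * cw x) := by
    rw [← hc]
    ring
  rw [phiC, kfun, hsq, eq_sub_iff_add_eq, ← add_div,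
    div_eq_iff (one_sub_conj_mul_cw_ne_zero hz x)]
  ring

theorem mulCLM_phiC {z : ℂ} (hz : ‖z‖ < 1) (x : L2) :
    mulCLM (phiC z) x = z • x
      - (Real.sqrt (1 - ‖z‖ ^ 2) : ℂ) • mulCLM (fourier 1) (mulCLM (kfun z) x) := by
  set c : ℂ := ((Real.sqrt (1 - ‖z‖ ^ 2) : ℝ) : ℂ)
  set y := mulCLM (fourier 1) (mulCLM (kfun z) x)
  apply Lp.ext
  filter_upwards [coeFn_mulCLM (memLp_phiC hz) x, Lp.coeFn_sub (z • x) (c • y),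
    Lp.coeFn_smul z x, Lp.coeFn_smul c y,
    coeFn_mulCLM (memLp_fourier 1) (mulCLM (kfun z) x), coeFn_mulCLM (memLp_kfun hz) x]
    with t h1 h2 h3 h4 h5 h6
  rw [h1, h2, Pi.sub_apply, h3, h4, Pi.smul_apply, Pi.smul_apply, h5, h6, smul_eq_mul, smul_eq_mul,
    phiC_eq_sub hz, cw]
  ring

theorem inHinf_fourier_one : InHinf (fourier 1 : 𝕋 → ℂ) :=
  ⟨memLp_fourier 1, by rw [symbolL2_continuousMap]; exact fourierLp_mem_Hardy 1⟩

theorem inHinf_kfun {z : ℂ} (hz : ‖z‖ < 1) : InHinf (kfun z) :=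
  ⟨memLp_kfun hz, kz_mem_Hardy hz⟩

theorem mulCLM_phiC_mem_Hardy {z : ℂ} (hz : ‖z‖ < 1) {x : L2} (hx : x ∈ Hardy) :
    mulCLM (phiC z) x ∈ Hardy := by
  rw [mulCLM_phiC hz]
  exact Hardy.sub_mem (Hardy.smul_mem _ hx) (Hardy.smul_mem _
    (mulCLM_mem_Hardy inHinf_fourier_one (mulCLM_mem_Hardy (inHinf_kfun hz) hx)))

theorem smul_Pfull_mulCLM_fourier_one_mulCLM_kfun {z : ℂ} (hz : ‖z‖ < 1) {y : L2}
    (hy : y ∈ Hardyᗮ) :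
    (Real.sqrt (1 - ‖z‖ ^ 2) : ℂ) • Pfull (mulCLM (fourier 1) (mulCLM (kfun z) y))
      = ⟪Vop (kz z), y⟫_ℂ • kz z := by
  set T : L2 →L[ℂ] L2 :=
    (Real.sqrt (1 - ‖z‖ ^ 2) : ℂ) • (Pfull ∘L mulCLM (fourier 1) ∘L mulCLM (kfun z))
      - rankOne (kz z) (Vop (kz z))
  have hT_apply : ∀ y, T y
      = (Real.sqrt (1 - ‖z‖ ^ 2) : ℂ) • Pfull (mulCLM (fourier 1) (mulCLM (kfun z) y))
        - ⟪Vop (kz z), y⟫_ℂ • kz z := fun _ => rfl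
  -- `(H²)ᗮ = V H²`, so it suffices to check `y = V e_m = e_{-1-m}`.
  suffices hT : Hardy ≤ (LinearMap.ker (T : L2 →ₗ[ℂ] L2)).comap VopL.toLinearMap by
    have := hT (Vop_mem_Hardy hy)
    rwa [Submodule.mem_comap, LinearMap.mem_ker, LinearIsometry.coe_toLinearMap, coe_VopL,
      Vop_Vop, ContinuousLinearMap.coe_coe, hT_apply, sub_eq_zero] at this
  refine Hardy_le_of_fourierLp_mem ((T.isClosed_ker).preimage VopL.continuous) fun m => ?_
  have hshift : mulCLM (fourier 1) (mulCLM (kfun z) (fourierLp 2 (-1 - m)))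
      = mulCLM (fourier (-m)) (kz z) := by
    rw [mulCLM_fourierLp (memLp_kfun hz), mulCLM_fourier_mulCLM_fourier, ← kz,
      show (1 : ℤ) + (-1 - m) = -(m : ℤ) by ring]
  have hcoeff : ⟪Vop (kz z), (fourierLp 2 (-1 - m) : L2)⟫_ℂ
      = (Real.sqrt (1 - ‖z‖ ^ 2) : ℂ) * conj z ^ m := by
    rw [inner_Vop_comm, Vop_fourierLp, sub_sub_cancel, inner_fourierLp_natCast_kz hz]
  rw [Submodule.mem_comap, LinearMap.mem_ker, LinearIsometry.coe_toLinearMap, coe_VopL,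
    Vop_fourierLp, ContinuousLinearMap.coe_coe, hT_apply, hshift, Pfull_mulCLM_fourier_neg_kz hz,
    hcoeff, smul_smul, sub_self]

theorem Pfull_mulCLM_phiC_of_mem_orthogonal {z : ℂ} (hz : ‖z‖ < 1) {y : L2}
    (hy : y ∈ Hardyᗮ) :
    Pfull (mulCLM (phiC z) y) = -(⟪Vop (kz z), y⟫_ℂ • kz z) := by
  rw [mulCLM_phiC hz, map_sub, map_smul, map_smul,
    smul_Pfull_mulCLM_fourier_one_mulCLM_kfun hz hy, Pfull_eq_starProjection,
    Hardy.starProjection_apply_eq_zero_iff.mpr hy, smul_zero, zero_sub]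

theorem Hankel_apply (f : 𝕋 → ℂ) (h : Hardy) :
    Hankel f h = mulCLM f h - Pfull (mulCLM f h) := rfl

theorem Hankel_mem_orthogonal (f : 𝕋 → ℂ) (h : Hardy) : Hankel f h ∈ Hardyᗮ :=
  Hardy.sub_starProjection_mem_orthogonal _

theorem coe_Toeplitz_phiC {z : ℂ} (hz : ‖z‖ < 1) (h : Hardy) :
    (Toeplitz (phiC z) h : L2) = mulCLM (phiC z) h :=
  Hardy.starProjection_eq_self_iff.mpr (mulCLM_phiC_mem_Hardy hz h.2)

theorem Hankel_Toeplitz_phiC {z : ℂ} (hz : ‖z‖ < 1) {g : 𝕋 → ℂ} (hg : MemLp g ⊤ μT)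
    (h : Hardy) :
    Hankel g (Toeplitz (phiC z) h)
      = mulCLM (phiC z) (Hankel g h) - Pfull (mulCLM (phiC z) (Hankel g h)) := by
  have hP : Pfull (mulCLM (phiC z) (Pfull (mulCLM g h))) = mulCLM (phiC z) (Pfull (mulCLM g h)) :=
    Hardy.starProjection_eq_self_iff.mpr
      (mulCLM_phiC_mem_Hardy hz (Hardy.starProjection_apply_mem _))
  rw [Hankel_apply, coe_Toeplitz_phiC hz, mulCLM_comm hg (memLp_phiC hz), Hankel_apply, map_sub,
    map_sub Pfull, hP]
  abel

theorem inner_Hankel_Vop_comm {f : 𝕋 → ℂ} (hf : MemLp f ⊤ μT) (h k : Hardy) :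
    ⟪Hankel f h, Vop k⟫_ℂ = ⟪Hankel f k, Vop h⟫_ℂ := by
  have key : ∀ a b : Hardy,
      ⟪Hankel f a, Vop b⟫_ℂ = ∫ t, conj (cw t * f t * (a : L2) t * (b : L2) t) ∂μT := by
    intro a b
    rw [Hankel_apply, inner_sub_left, Pfull_eq_starProjection, Hardy.inner_right_of_mem_orthogonal
      (Hardy.starProjection_apply_mem _) (Vop_mem_Hardy_orthogonal b.2), sub_zero,
      inner_L2_eq_integral]
    refine integral_congr_ae ?_
    filter_upwards [coeFn_mulCLM hf a, coeFn_Vop b] with t h1 h2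
    rw [h1, h2]
    simp only [map_mul]
    ring
  rw [key, key]
  congr 1 with t
  ring_nf

theorem inner_sub_inner_mulCLM_phiC {z : ℂ} (hz : ‖z‖ < 1) {a b : L2} (ha : a ∈ Hardyᗮ)
    (hb : b ∈ Hardyᗮ) :
    ⟪a, b⟫_ℂ - ⟪mulCLM (phiC z) a - Pfull (mulCLM (phiC z) a),
        mulCLM (phiC z) b - Pfull (mulCLM (phiC z) b)⟫_ℂ
      = ⟪a, Vop (kz z)⟫_ℂ * ⟪Vop (kz z), b⟫_ℂ := by
  rw [← inner_mulCLM_mulCLM_of_norm_eq_one (memLp_phiC hz) (norm_phiC hz),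
    Hardy.inner_eq_inner_starProjection_add, ← Pfull_eq_starProjection,
    Pfull_mulCLM_phiC_of_mem_orthogonal hz ha, Pfull_mulCLM_phiC_of_mem_orthogonal hz hb,
    inner_neg_neg, inner_smul_left, inner_smul_right, inner_kz_self hz, inner_conj_symm, mul_one,
    add_sub_cancel_right]

theorem inner_Hankel_sub_inner_Hankel_Toeplitz {z : ℂ} (hz : ‖z‖ < 1) {f g : 𝕋 → ℂ}
    (hf : MemLp f ⊤ μT) (hg : MemLp g ⊤ μT) (h' h : Hardy) :
    ⟪Hankel f h', Hankel g h⟫_ℂ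
        - ⟪Hankel f (Toeplitz (phiC z) h'), Hankel g (Toeplitz (phiC z) h)⟫_ℂ
      = ⟪(h' : L2), Vop (Hankel f (kzH z))⟫_ℂ * ⟪Vop h, Hankel g (kzH z)⟫_ℂ := by
  have hf_kz : ⟪Hankel f h', Vop (kz z)⟫_ℂ = ⟪(h' : L2), Vop (Hankel f (kzH z))⟫_ℂ := by
    rw [← coe_kzH hz, inner_Hankel_Vop_comm hf, ← inner_Vop_Vop, Vop_Vop]
  have hg_kz : ⟪Vop (kz z), Hankel g h⟫_ℂ = ⟪Vop h, Hankel g (kzH z)⟫_ℂ := by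
    rw [← coe_kzH hz, ← inner_conj_symm, inner_Hankel_Vop_comm hg, inner_conj_symm]
  rw [Hankel_Toeplitz_phiC hz hf, Hankel_Toeplitz_phiC hz hg,
    inner_sub_inner_mulCLM_phiC hz (Hankel_mem_orthogonal f h') (Hankel_mem_orthogonal g h),
    hf_kz, hg_kz]

theorem sub_adjoint_Toeplitz_phiC_apply (n : ℕ) (f g : Fin n → 𝕋 → ℂ)
    (hf : ∀ i, MemLp (f i) ⊤ μT) (hg : ∀ i, MemLp (g i) ⊤ μT) {z : ℂ} (hz : ‖z‖ < 1)
    (S D : Hardy →L[ℂ] Hardy)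
    (hS : S = ∑ i, (Hankel (f i)).adjoint.comp (Hankel (g i)))
    (hD : D = S - (Toeplitz (phiC z)).adjoint.comp (S.comp (Toeplitz (phiC z)))) (h : Hardy) :
    D h = ∑ i, ⟪Vop h, Hankel (g i) (kzH z)⟫_ℂ
      • Hardy.orthogonalProjectionOnto (Vop (Hankel (f i) (kzH z))) := by
  have hS_inner : ∀ h' k : Hardy,
      ⟪h', S k⟫_ℂ = ∑ i, ⟪Hankel (f i) h', Hankel (g i) k⟫_ℂ := by
    intro h' k
    simp only [hS, sum_apply, inner_sum, ContinuousLinearMap.comp_apply,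
      ContinuousLinearMap.adjoint_inner_right]
  refine ext_inner_left ℂ fun h' => ?_
  rw [hD, sub_apply, inner_sub_right, ContinuousLinearMap.comp_apply,
    ContinuousLinearMap.adjoint_inner_right, ContinuousLinearMap.comp_apply, hS_inner, hS_inner,
    ← Finset.sum_sub_distrib, inner_sum]
  refine Finset.sum_congr rfl fun i _ => ?_
  rw [inner_Hankel_sub_inner_Hankel_Toeplitz hz (hf i) (hg i), inner_smul_right (E := Hardy),
    Submodule.inner_orthogonalProjectionOnto_eq_of_mem_left, mul_comm]

/-- `V⁻¹ [∑ i (H_{f_i}* H_{g_i} − T_{φ_z}* H_{f_i}* H_{g_i} T_{φ_z})] V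
= ∑ i, H_{f_i} k_z ⊗ H_{g_i} k_z`; in particular the operator
`∑ i (H_{f_i}* H_{g_i} − T_{φ_z}* H_{f_i}* H_{g_i} T_{φ_z})` has rank at most `n`. -/
theorem Vop_conj_sum_hankel_eq_sum_rankOne (n : ℕ) (f g : Fin n → 𝕋 → ℂ)
    (hf : ∀ i, MemLp (f i) ⊤ μT) (hg : ∀ i, MemLp (g i) ⊤ μT)
    (z : ℂ) (hz : ‖z‖ < 1)
    (S D : Hardy →L[ℂ] Hardy)
    (hS : S = ∑ i, (Hankel (f i)).adjoint.comp (Hankel (g i)))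
    (hD : D = S - (Toeplitz (phiC z)).adjoint.comp (S.comp (Toeplitz (phiC z)))) :
    (∀ u : L2, Vop ↑(D (Hardy.orthogonalProjectionOnto (Vop u)))
        = (∑ i, rankOne (Hankel (f i) (kzH z)) (Hankel (g i) (kzH z))) u) ∧
    LinearMap.rank (D : Hardy →ₗ[ℂ] Hardy) ≤ n := by
  have hD_apply := sub_adjoint_Toeplitz_phiC_apply n f g hf hg hz S D hS hD
  refine ⟨fun u => ?_, LinearMap.rank_le_of_range_le_span _
    (fun i => Hardy.orthogonalProjectionOnto (Vop (Hankel (f i) (kzH z)))) ?_⟩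
  · have hVh : Vop (Hardy.orthogonalProjectionOnto (Vop u)) = u - Pfull u := by
      rw [← Submodule.starProjection_apply, ← Pfull_eq_starProjection, Pfull_Vop, Vop_Vop]
    rw [hD_apply, Submodule.coe_sum, ← coe_VopL, map_sum, sum_apply]
    refine Finset.sum_congr rfl fun i _ => ?_
    have hw : (Hardy.orthogonalProjectionOnto (Vop (Hankel (f i) (kzH z))) : L2)
        = Vop (Hankel (f i) (kzH z)) :=
      Hardy.starProjection_eq_self_iff.mpr (Vop_mem_Hardy (Hankel_mem_orthogonal _ _))
    rw [Submodule.coe_smul, map_smulₛₗ, coe_VopL, hw, Vop_Vop, hVh, rankOne_apply,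
      inner_sub_left, Pfull_eq_starProjection, Hardy.inner_right_of_mem_orthogonal
      (Hardy.starProjection_apply_mem u) (Hankel_mem_orthogonal _ _), sub_zero, inner_conj_symm]
  · rintro _ ⟨h, rfl⟩
    rw [ContinuousLinearMap.coe_coe, hD_apply h]
    exact Submodule.sum_mem _ fun i _ => Submodule.smul_mem _ _ (Submodule.subset_span ⟨i, rfl⟩)

end HardySpace
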